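/- For all real x with 0 < x < π/2, one has f₁(x) > 0, where f₁(x) := ((−4π + 12)x + 3π² − 6π)·sin x − π(π − 2)·x·cos x + x·((4π − 12)x − 2π² + 4π). -/

import Mathlib

/-!
The function vanishes to fourth order at `0` and to first order at `π / 2`. On `(0, 1]` replace `sin x` and `cos x` by their Taylor
polynomials of degree 7 and 4, a lower bound for `sin` and an upper bound for `cos`, which is
the right direction because the coefficients of `sin x` and `-cos x` are nonnegative: the
result is `x ^ 4` times a quartic that a crude estimate of `π` shows to be positive. On
`(1, π / 2)` do the same at `π / 2` in the variable `y = π / 2 - x`, with the degree 6 and 5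
polynomials; the result is `y` times a positive sextic for `y < 0.58`. The alternating Taylor
bounds for `t ≥ 0` follow by repeatedly integrating `cos t ≤ 1`.
-/

open Real Finset Nat

noncomputable def sinTaylor (n : ℕ) (t : ℝ) : ℝ :=
  ∑ k ∈ range n, (-1) ^ k * t ^ (2 * k + 1) / (2 * k + 1)!

noncomputable def cosTaylor (n : ℕ) (t : ℝ) : ℝ :=
  ∑ k ∈ range n, (-1) ^ k * t ^ (2 * k) / (2 * k)!

theorem hasDerivAt_sinTaylor (n : ℕ) (t : ℝ) : HasDerivAt (sinTaylor n) (cosTaylor n t) t := by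
  refine HasDerivAt.fun_sum fun k _ ↦
    (((hasDerivAt_pow _ t).const_mul _).div_const _).congr_deriv ?_
  rw [factorial_succ]
  push_cast
  field_simp

theorem hasDerivAt_cosTaylor_succ (n : ℕ) (t : ℝ) :
    HasDerivAt (cosTaylor (n + 1)) (-sinTaylor n t) t := by
  have h : cosTaylor (n + 1) =
      fun t ↦ ∑ k ∈ range n, (-1 : ℝ) ^ (k + 1) * t ^ (2 * k + 2) / (2 * k + 2)! + 1 := by
    funext t
    simp [cosTaylor, sum_range_succ', mul_add]
  rw [h, sinTaylor, ← sum_neg_distrib]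
  refine (HasDerivAt.fun_sum fun k _ ↦
    (((hasDerivAt_pow _ t).const_mul _).div_const _).congr_deriv ?_).add_const 1
  rw [factorial_succ (2 * k + 1)]
  push_cast
  field_simp
  ring

theorem nonneg_of_hasDerivAt_of_nonneg {f f' : ℝ → ℝ} (hf : ∀ t, HasDerivAt f (f' t) t)
    (h₀ : f 0 = 0) (hf' : ∀ t, 0 ≤ t → 0 ≤ f' t) {t : ℝ} (ht : 0 ≤ t) : 0 ≤ f t := by
  have hmono : MonotoneOn f (Set.Ici 0) :=
    monotoneOn_of_hasDerivWithinAt_nonneg (convex_Ici 0)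
      (fun x _ ↦ (hf x).continuousAt.continuousWithinAt)
      (fun x _ ↦ (hf x).hasDerivWithinAt)
      (fun x hx ↦ hf' x (interior_subset hx))
  simpa [h₀] using hmono Set.self_mem_Ici ht ht

section TaylorBounds

variable {n : ℕ} {t : ℝ}

theorem neg_one_pow_mul_sinTaylor_sub_sin_nonneg_of_cos
    (h : ∀ t, 0 ≤ t → 0 ≤ (-1) ^ n * (cosTaylor (n + 1) t - cos t)) (ht : 0 ≤ t) :
    0 ≤ (-1) ^ n * (sinTaylor (n + 1) t - sin t) :=
  nonneg_of_hasDerivAt_of_nonneg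
    (fun t ↦ ((hasDerivAt_sinTaylor _ t).sub (hasDerivAt_sin t)).const_mul _)
    (by simp [sinTaylor]) h ht

theorem neg_one_pow_mul_cosTaylor_sub_cos_nonneg (n : ℕ) (ht : 0 ≤ t) :
    0 ≤ (-1) ^ n * (cosTaylor (n + 1) t - cos t) := by
  induction n generalizing t with
  | zero => simpa [cosTaylor] using cos_le_one t
  | succ n ih =>
    refine nonneg_of_hasDerivAt_of_nonneg
      (fun t ↦ ((hasDerivAt_cosTaylor_succ _ t).sub (hasDerivAt_cos t)).const_mul _)
      (by simp [cosTaylor, sum_range_succ']) (fun s hs ↦ ?_) ht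
    convert neg_one_pow_mul_sinTaylor_sub_sin_nonneg_of_cos (fun _ ↦ ih) hs using 1
    ring

theorem neg_one_pow_mul_sinTaylor_sub_sin_nonneg (n : ℕ) (ht : 0 ≤ t) :
    0 ≤ (-1) ^ n * (sinTaylor (n + 1) t - sin t) :=
  neg_one_pow_mul_sinTaylor_sub_sin_nonneg_of_cos
    (fun _ ↦ neg_one_pow_mul_cosTaylor_sub_cos_nonneg n) ht

theorem sin_le_sinTaylor (hn : Even n) (ht : 0 ≤ t) : sin t ≤ sinTaylor (n + 1) t := by
  simpa [hn.neg_one_pow] using neg_one_pow_mul_sinTaylor_sub_sin_nonneg n ht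

theorem sinTaylor_le_sin (hn : Odd n) (ht : 0 ≤ t) : sinTaylor (n + 1) t ≤ sin t := by
  simpa [hn.neg_one_pow] using neg_one_pow_mul_sinTaylor_sub_sin_nonneg n ht

theorem cos_le_cosTaylor (hn : Even n) (ht : 0 ≤ t) : cos t ≤ cosTaylor (n + 1) t := by
  simpa [hn.neg_one_pow] using neg_one_pow_mul_cosTaylor_sub_cos_nonneg n ht

theorem cosTaylor_le_cos (hn : Odd n) (ht : 0 ≤ t) : cosTaylor (n + 1) t ≤ cos t := by
  simpa [hn.neg_one_pow] using neg_one_pow_mul_cosTaylor_sub_cos_nonneg n ht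

end TaylorBounds

noncomputable def f1 (x : ℝ) : ℝ :=
  ((-4 * π + 12) * x + 3 * π ^ 2 - 6 * π) * sin x - π * (π - 2) * x * cos x +
    x * ((4 * π - 12) * x - 2 * π ^ 2 + 4 * π)

/-- The Taylor minorant of `f1 x` on `(0, 1]`, divided by `x ^ 4`. -/
theorem taylor_minorant_quotient_pos_near_zero {x : ℝ} (hx : 0 < x) (hx1 : x ≤ 1) :
    0 < -2 + 2 / 3 * π + (π / 30 - π ^ 2 / 60) * x + (1 / 10 - π / 30) * x ^ 2 +
      (π / 840 - π ^ 2 / 1680) * x ^ 3 + (-1 / 420 + π / 1260) * x ^ 4 := by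
  have hpi1 : (3.141592 : ℝ) < π := pi_gt_d6
  have hpi2 : π < 3.141593 := pi_lt_d6
  nlinarith [mul_nonneg (by nlinarith : (0 : ℝ) ≤ π ^ 2 / 60 - π / 30) (by linarith : 0 ≤ 1 - x),
    mul_nonneg (by nlinarith : (0 : ℝ) ≤ π / 30 - 1 / 10)
      (by nlinarith : 0 ≤ 1 - x ^ 2),
    mul_nonneg (by nlinarith : (0 : ℝ) ≤ π ^ 2 / 1680 - π / 840)
      (by nlinarith [pow_le_one₀ hx.le hx1 (n := 3)] : 0 ≤ 1 - x ^ 3),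
    mul_nonneg (by nlinarith : (0 : ℝ) ≤ π / 1260 - 1 / 420) (pow_nonneg hx.le 4)]

theorem f1_pos_of_le_one {x : ℝ} (hx : 0 < x) (hx1 : x ≤ 1) : 0 < f1 x := by
  have hA : 0 ≤ (-4 * π + 12) * x + 3 * π ^ 2 - 6 * π := by nlinarith [pi_gt_three, pi_lt_d2]
  have hC : 0 ≤ π * (π - 2) * x :=
    mul_nonneg (mul_nonneg pi_pos.le (by linarith [pi_gt_three])) hx.le
  have hs : x - x ^ 3 / 6 + x ^ 5 / 120 - x ^ 7 / 5040 ≤ sin x :=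
    (sinTaylor_le_sin (n := 3) ⟨1, rfl⟩ hx.le).trans_eq'
      (by simp [sinTaylor, sum_range_succ, factorial]; ring)
  have hc : cos x ≤ 1 - x ^ 2 / 2 + x ^ 4 / 24 :=
    (cos_le_cosTaylor (n := 2) even_two hx.le).trans_eq
      (by simp [cosTaylor, sum_range_succ, factorial]; ring)
  have := mul_pos (pow_pos hx 4) (taylor_minorant_quotient_pos_near_zero hx hx1)
  unfold f1
  linarith [mul_le_mul_of_nonneg_left hs hA, mul_le_mul_of_nonneg_left hc hC]

/-- The Taylor minorant of `f1 (π / 2 - y)`, divided by `y`. -/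
theorem taylor_minorant_quotient_pos_near_pi_div_two {y : ℝ} (hy : 0 < y) (hy1 : y < 0.58) :
    0 < -12 + 12 * π - π ^ 2 - π ^ 3 / 2 + (-12 + 2 * π + π ^ 2 / 2) * y +
      (6 - 2 * π - π ^ 2 / 6 + π ^ 3 / 12) * y ^ 2 + (π / 3 - π ^ 2 / 8) * y ^ 3 +
      (-1 / 2 + π / 6 + π ^ 2 / 120 - π ^ 3 / 240) * y ^ 4 + (-π / 60 + π ^ 2 / 144) * y ^ 5 +
      (1 / 60 - π / 180) * y ^ 6 := by
  have hpi1 : (3.141592 : ℝ) < π := pi_gt_d6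
  have hpi2 : π < 3.141593 := pi_lt_d6
  have hp2l : (9.8696002 : ℝ) < π ^ 2 := by nlinarith
  have hp2u : π ^ 2 < 9.8696066 := by nlinarith
  have hp3l : (31.0062573 : ℝ) < π ^ 3 := by nlinarith
  have hp3u : π ^ 3 < 31.006287 := by nlinarith
  have hy1' : (0 : ℝ) ≤ 0.58 - y := by linarith
  nlinarith [sq_nonneg (y - 0.6), mul_pos hy hy, mul_pos (mul_pos hy hy) hy,
    mul_nonneg (mul_nonneg hy.le hy.le) (mul_nonneg hy.le hy.le),
    pow_nonneg hy.le 5, pow_nonneg hy.le 6,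
    mul_nonneg (pow_nonneg hy.le 2) (sq_nonneg (y - 0.6)),
    mul_nonneg (mul_nonneg hy.le hy1') (pow_nonneg hy.le 2),
    mul_nonneg (mul_nonneg hy.le hy1') (pow_nonneg hy.le 3),
    mul_nonneg (mul_nonneg hy.le hy1') (pow_nonneg hy.le 4)]

theorem f1_pos_of_one_lt {x : ℝ} (hx1 : 1 < x) (hx : x < π / 2) : 0 < f1 x := by
  obtain ⟨y, rfl⟩ : ∃ y, x = π / 2 - y := ⟨π / 2 - x, by ring⟩
  have hy : 0 < y := by linarith
  have hy1 : y < 0.58 := by linarith [pi_lt_d2]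
  have hA : 0 ≤ (-4 * π + 12) * (π / 2 - y) + 3 * π ^ 2 - 6 * π := by
    nlinarith [pi_gt_three, pi_lt_d2]
  have hC : 0 ≤ π * (π - 2) * (π / 2 - y) :=
    mul_nonneg (mul_nonneg pi_pos.le (by linarith [pi_gt_three])) (by linarith)
  have hc : 1 - y ^ 2 / 2 + y ^ 4 / 24 - y ^ 6 / 720 ≤ cos y :=
    (cosTaylor_le_cos (n := 3) ⟨1, rfl⟩ hy.le).trans_eq'
      (by simp [cosTaylor, sum_range_succ, factorial]; ring)
  have hs : sin y ≤ y - y ^ 3 / 6 + y ^ 5 / 120 :=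
    (sin_le_sinTaylor (n := 2) even_two hy.le).trans_eq
      (by simp [sinTaylor, sum_range_succ, factorial]; ring)
  have := mul_pos hy (taylor_minorant_quotient_pos_near_pi_div_two hy hy1)
  unfold f1
  rw [sin_pi_div_two_sub, cos_pi_div_two_sub]
  linarith [mul_le_mul_of_nonneg_left hc hA, mul_le_mul_of_nonneg_left hs hC]

theorem f1_pos (x : ℝ) (hx : 0 < x) (hx' : x < π / 2) :
    0 < ((-4 * π + 12) * x + 3 * π ^ 2 - 6 * π) * sin x - π * (π - 2) * x * cos x +
        x * ((4 * π - 12) * x - 2 * π ^ 2 + 4 * π) := by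
  rcases le_or_gt x 1 with hx1 | hx1
  exacts [f1_pos_of_le_one hx hx1, f1_pos_of_one_lt hx1 hx']
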